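/- arXiv:2310.06638 — 8 statements merged into one kernel-verified Lean document; each statement's English description precedes it below -/
import Mathlib

section
/- For every integer m ≥ 0, every t ≥ 0, and any two nonnegative rate vectors λ = (λ_1,…,λ_k) and μ = (μ_1,…,μ_k), one has Σ_{l=0}^{m} p(λ; l, t) · p(μ; m−l, t) = p(λ+μ; m, t), where λ+μ = (λ_1+μ_1,…,λ_k+μ_k). In other words, the sum of two independent GCPs with rates λ and μ is distributed as a GCP with rates λ_j + μ_j (different numbers of jump kinds k_1 < k_2 are covered by setting the extra rates equal to zero). -/
open Finset

/-- The set `Ω(k, n)` of tuples `x : Fin k → ℕ` with `∑_{j=1}^k j * x_j = n`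
(`j : Fin k` represents the jump size `j + 1`). -/
def gcpOmega (k n : ℕ) : Finset (Fin k → ℕ) :=
  (Fintype.piFinset fun _ : Fin k => Finset.range (n + 1)).filter
    fun x => ∑ j : Fin k, (j.1 + 1) * x j = n

/-- The probability mass function of the generalized counting process with jump
rates `lam j` for jumps of size `j + 1`, evaluated at state `n` and time `t`. -/
noncomputable def gcpPMF (k : ℕ) (lam : Fin k → ℝ) (n : ℕ) (t : ℝ) : ℝ :=
  ∑ x ∈ gcpOmega k n,
    ∏ j : Fin k, (lam j * t) ^ (x j) / (Nat.factorial (x j)) * Real.exp (-(lam j * t))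

/-! Each `p(λ; n, t)` is a sum over `Ω(k, n)` of products of Poisson weights, one per jump size.
Multiplying two such sums and summing over the split `l + (m - l) = m` amounts to summing over
pairs `(x, y)`, which correspond exactly to a tuple `z = x + y ∈ Ω(k, m)` together with a
splitting of each coordinate `z j`. Coordinatewise, Poisson weights convolve:
`∑_{a+b=n} P(α, a) P(β, b) = P(α + β, n)` by the binomial theorem and
`exp (α + β) = exp α exp β`.
-/

theorem add_pow_div_factorial {K : Type*} [Field K] [CharZero K] (a b : K) (n : ℕ) :
    (a + b) ^ n / n.factorial =
      ∑ p ∈ antidiagonal n, a ^ p.1 / p.1.factorial * (b ^ p.2 / p.2.factorial) := by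
  rw [(Commute.all a b).add_pow', sum_div]
  refine sum_congr rfl fun p hp => ?_
  obtain ⟨i, j⟩ := p
  obtain rfl := mem_antidiagonal.mp hp
  have hfac : ((i + j).factorial : K) ≠ 0 := Nat.cast_ne_zero.2 (Nat.factorial_ne_zero _)
  rw [nsmul_eq_mul, Nat.cast_add_choose]
  field_simp

noncomputable def poissonWeight (a : ℝ) (n : ℕ) : ℝ :=
  a ^ n / n.factorial * Real.exp (-a)

theorem sum_antidiagonal_poissonWeight_mul (a b : ℝ) (n : ℕ) :
    ∑ p ∈ antidiagonal n, poissonWeight a p.1 * poissonWeight b p.2 =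
      poissonWeight (a + b) n := by
  simp only [poissonWeight]
  rw [add_pow_div_factorial, sum_mul, neg_add, Real.exp_add]
  exact sum_congr rfl fun _ _ => by ring

theorem mem_gcpOmega {k n : ℕ} {x : Fin k → ℕ} :
    x ∈ gcpOmega k n ↔ ∑ j : Fin k, (j.1 + 1) * x j = n := by
  simp only [gcpOmega, mem_filter, Fintype.mem_piFinset, mem_range, and_iff_right_iff_imp]
  rintro rfl j
  calc x j ≤ (j.1 + 1) * x j := Nat.le_mul_of_pos_left _ j.1.succ_pos
    _ ≤ ∑ i : Fin k, (i.1 + 1) * x i :=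
      single_le_sum (f := fun i : Fin k => (i.1 + 1) * x i) (fun _ _ => Nat.zero_le _) (mem_univ j)
    _ < _ := Nat.lt_succ_self _

theorem sum_range_sum_gcpOmega_sum_gcpOmega {R : Type*} [AddCommMonoid R] {k : ℕ}
    (F : (Fin k → ℕ) → (Fin k → ℕ) → R) (m : ℕ) :
    ∑ l ∈ range (m + 1), ∑ x ∈ gcpOmega k l, ∑ y ∈ gcpOmega k (m - l), F x y =
      ∑ z ∈ gcpOmega k m, ∑ w ∈ Fintype.piFinset fun j => antidiagonal (z j),
        F (fun j => (w j).1) (fun j => (w j).2) := by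
  simp_rw [← sum_product' (f := F)]
  rw [sum_sigma', sum_sigma']
  refine sum_nbij' (fun p => ⟨p.2.1 + p.2.2, fun j => (p.2.1 j, p.2.2 j)⟩)
    (fun q => ⟨∑ j : Fin k, (j.1 + 1) * (q.2 j).1, fun j => (q.2 j).1, fun j => (q.2 j).2⟩)
    ?_ ?_ ?_ ?_ fun _ _ => rfl
  · rintro ⟨l, x, y⟩ hp
    simp only [mem_sigma, mem_product, mem_range, mem_gcpOmega] at hp
    simp only [mem_sigma, mem_gcpOmega, Fintype.mem_piFinset, HasAntidiagonal.mem_antidiagonal,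
      Pi.add_apply, imp_true_iff, and_true, mul_add, sum_add_distrib, hp.2.1, hp.2.2]
    omega
  · rintro ⟨z, w⟩ hq
    simp only [mem_sigma, mem_gcpOmega, Fintype.mem_piFinset,
      HasAntidiagonal.mem_antidiagonal] at hq
    have hsplit : ∑ j : Fin k, (j.1 + 1) * (w j).1 + ∑ j : Fin k, (j.1 + 1) * (w j).2 = m := by
      simp only [← sum_add_distrib, ← mul_add, hq.2, hq.1]
    simp only [mem_sigma, mem_product, mem_range, mem_gcpOmega, true_and]
    omega
  · rintro ⟨l, x, y⟩ hp
    simp only [mem_sigma, mem_product, mem_gcpOmega] at hp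
    exact Sigma.ext hp.2.1 HEq.rfl
  · rintro ⟨z, w⟩ hq
    simp only [mem_sigma, Fintype.mem_piFinset, HasAntidiagonal.mem_antidiagonal] at hq
    exact Sigma.ext (funext hq.2) HEq.rfl

theorem sum_range_mul_sum_gcpOmega {R : Type*} [CommSemiring R] {k : ℕ}
    (f g : Fin k → ℕ → R) (m : ℕ) :
    ∑ l ∈ range (m + 1), (∑ x ∈ gcpOmega k l, ∏ j, f j (x j)) *
        ∑ y ∈ gcpOmega k (m - l), ∏ j, g j (y j) =
      ∑ z ∈ gcpOmega k m, ∏ j, ∑ p ∈ antidiagonal (z j), f j p.1 * g j p.2 := by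
  simp_rw [sum_mul_sum, ← prod_mul_distrib, prod_univ_sum]
  exact sum_range_sum_gcpOmega_sum_gcpOmega _ m

theorem gcpPMF_eq_sum_prod_poissonWeight (k : ℕ) (lam : Fin k → ℝ) (n : ℕ) (t : ℝ) :
    gcpPMF k lam n t = ∑ x ∈ gcpOmega k n, ∏ j, poissonWeight (lam j * t) (x j) :=
  rfl

theorem merging_of_two_gcps_general (k : ℕ) (lam mu : Fin k → ℝ) (t : ℝ) (m : ℕ) :
    ∑ l ∈ Finset.range (m + 1), gcpPMF k lam l t * gcpPMF k mu (m - l) t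
      = gcpPMF k (fun j => lam j + mu j) m t := by
  simp only [gcpPMF_eq_sum_prod_poissonWeight]
  rw [sum_range_mul_sum_gcpOmega]
  simp only [sum_antidiagonal_poissonWeight_mul, add_mul]

/-- The sum of two independent GCPs with rate vectors `lam` and `mu` is a GCP with
rate vector `lam + mu`. -/
theorem merging_of_two_gcps (k : ℕ) (hk : 1 ≤ k) (lam mu : Fin k → ℝ)
    (hlam : ∀ j, 0 ≤ lam j) (hmu : ∀ j, 0 ≤ mu j) (t : ℝ) (ht : 0 ≤ t) (m : ℕ) :
    ∑ l ∈ Finset.range (m + 1), gcpPMF k lam l t * gcpPMF k mu (m - l) t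
      = gcpPMF k (fun j => lam j + mu j) m t :=
  merging_of_two_gcps_general k lam mu t m
end

section
/- Let (λ^{(i)})_{i≥1} be a sequence of nonnegative rate vectors in ℝ^k and set β^n_j = Σ_{i=1}^{n} λ_j^{(i)}. If for every j ∈ {1,…,k} the series Σ_{i=1}^{∞} λ_j^{(i)} converges to β_j < ∞, then for every r ∈ ℕ₀ and every t ≥ 0, lim_{n→∞} p(β^n; r, t) = p(β; r, t), where β = (β_1,…,β_k). Consequently the merged process of countably many independent GCPs is a GCP with jump rates β_1,…,β_k. -/
open Finset

open Filter Topology in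
/-- If the partial sums `β^n_j = ∑_{i<n} lam i j` converge to `β_j < ∞` for every `j`,
then the GCP pmf with rates `β^n` converges to the GCP pmf with rates `β`:
the merged process of countably many independent GCPs is a GCP with rates `β`. -/
theorem merging_of_countably_many_gcps (k : ℕ) (hk : 1 ≤ k) (lam : ℕ → Fin k → ℝ)
    (hlam : ∀ i j, 0 ≤ lam i j) (beta : Fin k → ℝ)
    (hconv : ∀ j, Tendsto (fun n => ∑ i ∈ Finset.range n, lam i j) atTop (𝓝 (beta j)))
    (r : ℕ) (t : ℝ) (ht : 0 ≤ t) :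
    Tendsto (fun n => gcpPMF k (fun j => ∑ i ∈ Finset.range n, lam i j) r t) atTop
      (𝓝 (gcpPMF k beta r t)) := by
  unfold gcpPMF
  apply tendsto_finset_sum
  intro x _
  apply tendsto_finset_prod
  intro j _
  exact ((((hconv j).mul_const t).pow _).div_const _).mul
    ((Real.continuous_exp.tendsto _).comp (((hconv j).mul_const t).neg))
end

section
/- Let (λ^{(i)})_{i≥1} be a sequence of nonnegative rate vectors in ℝ^k and set β^n_j = Σ_{i=1}^{n} λ_j^{(i)}. If for some j₀ ∈ {1,…,k} the partial sums β^n_{j₀} tend to ∞ as n → ∞, then for every r ∈ ℕ₀ and every t > 0, lim_{n→∞} Σ_{m=0}^{r} p(β^n; m, t) = 0; that is, the merged process of the countably many GCPs diverges with probability 1. -/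
open Finset

/-- A single Poisson pmf term is nonnegative. -/
lemma poisson_term_nonneg {u : ℝ} (hu : 0 ≤ u) (s : ℕ) :
    0 ≤ u ^ s / (Nat.factorial s) * Real.exp (-u) := by
  positivity

/-- A single Poisson pmf term is at most `1`. -/
lemma poisson_term_le_one {u : ℝ} (hu : 0 ≤ u) (s : ℕ) :
    u ^ s / (Nat.factorial s) * Real.exp (-u) ≤ 1 := by
  have h1 : u ^ s / (Nat.factorial s) ≤ Real.exp u := by
    calc u ^ s / (Nat.factorial s)
        ≤ ∑ i ∈ Finset.range (s + 1), u ^ i / (Nat.factorial i) := by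
          apply Finset.single_le_sum (f := fun i => u ^ i / (Nat.factorial i))
          · intro i _; positivity
          · simp
      _ ≤ Real.exp u := Real.sum_le_exp_of_nonneg hu _
  calc u ^ s / (Nat.factorial s) * Real.exp (-u)
      ≤ Real.exp u * Real.exp (-u) := by
        apply mul_le_mul_of_nonneg_right h1 (Real.exp_nonneg _)
    _ = 1 := by rw [← Real.exp_add]; simp

lemma gcpPMF_nonneg (k : ℕ) (lam : Fin k → ℝ) (hlam : ∀ j, 0 ≤ lam j)
    (n : ℕ) {t : ℝ} (ht : 0 ≤ t) : 0 ≤ gcpPMF k lam n t := by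
  apply Finset.sum_nonneg
  intro x _
  apply Finset.prod_nonneg
  intro j _
  exact poisson_term_nonneg (mul_nonneg (hlam j) ht) _

lemma gcpPMF_le (k : ℕ) (lam : Fin k → ℝ) (hlam : ∀ j, 0 ≤ lam j)
    (j₀ : Fin k) (n : ℕ) {t : ℝ} (ht : 0 ≤ t) :
    gcpPMF k lam n t ≤
      (n + 1) ^ k * ((1 + lam j₀ * t) ^ n * Real.exp (-(lam j₀ * t))) := by
  set u : ℝ := lam j₀ * t with hu
  have hu0 : 0 ≤ u := mul_nonneg (hlam j₀) ht
  have hbound : ∀ x ∈ gcpOmega k n,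
      (∏ j : Fin k, (lam j * t) ^ (x j) / (Nat.factorial (x j)) * Real.exp (-(lam j * t)))
        ≤ (1 + u) ^ n * Real.exp (-u) := by
    intro x hx
    have hxn : x j₀ ≤ n := by
      simp only [gcpOmega, Finset.mem_filter, Fintype.mem_piFinset] at hx
      have := hx.1 j₀
      simpa [Nat.lt_succ_iff] using this
    have hprod : (∏ j : Fin k, (lam j * t) ^ (x j) / (Nat.factorial (x j)) *
        Real.exp (-(lam j * t)))
        ≤ u ^ (x j₀) / (Nat.factorial (x j₀)) * Real.exp (-u) := by
      rw [← Finset.mul_prod_erase Finset.univ _ (Finset.mem_univ j₀)]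
      have h1 : (∏ j ∈ Finset.univ.erase j₀,
          (lam j * t) ^ (x j) / (Nat.factorial (x j)) * Real.exp (-(lam j * t))) ≤ 1 := by
        apply Finset.prod_le_one
        · intro j _; exact poisson_term_nonneg (mul_nonneg (hlam j) ht) _
        · intro j _; exact poisson_term_le_one (mul_nonneg (hlam j) ht) _
      calc (u ^ (x j₀) / (Nat.factorial (x j₀)) * Real.exp (-u)) *
            ∏ j ∈ Finset.univ.erase j₀,
              (lam j * t) ^ (x j) / (Nat.factorial (x j)) * Real.exp (-(lam j * t))
          ≤ (u ^ (x j₀) / (Nat.factorial (x j₀)) * Real.exp (-u)) * 1 := by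
            apply mul_le_mul_of_nonneg_left h1 (poisson_term_nonneg hu0 _)
        _ = u ^ (x j₀) / (Nat.factorial (x j₀)) * Real.exp (-u) := mul_one _
    refine hprod.trans ?_
    have h2 : u ^ (x j₀) / (Nat.factorial (x j₀)) ≤ (1 + u) ^ n := by
      calc u ^ (x j₀) / (Nat.factorial (x j₀)) ≤ u ^ (x j₀) := by
            apply div_le_self (pow_nonneg hu0 _)
            exact_mod_cast Nat.one_le_iff_ne_zero.mpr (Nat.factorial_ne_zero _)
        _ ≤ (1 + u) ^ (x j₀) := by
            apply pow_le_pow_left₀ hu0 (by linarith)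
        _ ≤ (1 + u) ^ n := by
            apply pow_le_pow_right₀ (by linarith) hxn
    exact mul_le_mul_of_nonneg_right h2 (Real.exp_nonneg _)
  calc gcpPMF k lam n t
      ≤ ∑ _x ∈ gcpOmega k n, (1 + u) ^ n * Real.exp (-u) :=
        Finset.sum_le_sum hbound
    _ = (gcpOmega k n).card * ((1 + u) ^ n * Real.exp (-u)) := by
        rw [Finset.sum_const, nsmul_eq_mul]
    _ ≤ (n + 1) ^ k * ((1 + u) ^ n * Real.exp (-u)) := by
        apply mul_le_mul_of_nonneg_right _ (by positivity)
        have hcard : (gcpOmega k n).card ≤ (n + 1) ^ k := by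
          calc (gcpOmega k n).card
              ≤ (Fintype.piFinset fun _ : Fin k => Finset.range (n + 1)).card :=
                Finset.card_filter_le _ _
            _ = (n + 1) ^ k := by
                rw [Fintype.card_piFinset]; simp
        exact_mod_cast hcard

open Filter Topology in
lemma aux_tendsto (m : ℕ) {b : ℕ → ℝ} (hb : Tendsto b atTop atTop) :
    Tendsto (fun n => (1 + b n) ^ m * Real.exp (-(b n))) atTop (𝓝 0) := by
  have h1 : Tendsto (fun n => (1 : ℝ) + b n) atTop atTop :=
    tendsto_atTop_add_const_left _ 1 hb
  have h2 : Tendsto (fun x : ℝ => x ^ m * Real.exp (-x)) atTop (𝓝 0) :=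
    Real.tendsto_pow_mul_exp_neg_atTop_nhds_zero m
  have h3 : Tendsto (fun n => (1 + b n) ^ m * Real.exp (-(1 + b n))) atTop (𝓝 0) :=
    h2.comp h1
  have h4 : Tendsto (fun n => ((1 + b n) ^ m * Real.exp (-(1 + b n))) * Real.exp 1)
      atTop (𝓝 (0 * Real.exp 1)) := h3.mul_const _
  rw [zero_mul] at h4
  convert h4 using 2 with n
  rw [mul_assoc, ← Real.exp_add]
  ring_nf

open Filter Topology in
/-- If for some jump size `j₀` the partial sums of the rates diverge, then the merged
process of the countably many GCPs diverges with probability one: for every `r` and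
every `t > 0`, the probability that the merged process is at most `r` tends to `0`. -/
theorem divergence_of_merged_gcp (k : ℕ) (hk : 1 ≤ k) (lam : ℕ → Fin k → ℝ)
    (hlam : ∀ i j, 0 ≤ lam i j) (j₀ : Fin k)
    (hdiv : Tendsto (fun n => ∑ i ∈ Finset.range n, lam i j₀) atTop atTop)
    (r : ℕ) (t : ℝ) (ht : 0 < t) :
    Tendsto
      (fun n => ∑ m ∈ Finset.range (r + 1),
        gcpPMF k (fun j => ∑ i ∈ Finset.range n, lam i j) m t) atTop (𝓝 0) := by
  have hβ : ∀ n j, 0 ≤ ∑ i ∈ Finset.range n, lam i j := fun n j =>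
    Finset.sum_nonneg fun i _ => hlam i j
  have key : ∀ m : ℕ, Tendsto
      (fun n => gcpPMF k (fun j => ∑ i ∈ Finset.range n, lam i j) m t) atTop (𝓝 0) := by
    intro m
    set b : ℕ → ℝ := fun n => (∑ i ∈ Finset.range n, lam i j₀) * t with hb
    have hbt : Tendsto b atTop atTop := hdiv.atTop_mul_const ht
    have hub : Tendsto (fun n => ((m : ℝ) + 1) ^ k * ((1 + b n) ^ m * Real.exp (-(b n))))
        atTop (𝓝 0) := by
      have := (aux_tendsto m hbt).const_mul (((m : ℝ) + 1) ^ k)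
      simpa using this
    refine tendsto_of_tendsto_of_tendsto_of_le_of_le tendsto_const_nhds hub ?_ ?_
    · intro n
      exact gcpPMF_nonneg k _ (hβ n) m ht.le
    · intro n
      exact gcpPMF_le k _ (hβ n) j₀ m ht.le
  have := tendsto_finset_sum (Finset.range (r + 1)) fun m _ => key m
  simpa using this
end

section
/- For all real u, v with |u| ≤ 1 and |v| ≤ 1 and all t ≥ 0, the joint probability mass function q(a,n,t) satisfies the generating-function identity Σ_{n=0}^{∞} Σ_{a=0}^{n} q(a, n, t) u^a v^n = exp( ( −Λ + Σ_{j=1}^{K₁} ν_j u v^j + Σ_{l=1}^{K₂} ρ_l v^l ) t ), the double series converging absolutely. -/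
open Finset

/-- The index set `Θ(a, n)` of pairs `(r, s)` with `∑_j r_j = a` and
`∑_j j·r_j + ∑_l l·s_l = n` (`j : Fin K1` represents jump size `j + 1`, and
`l : Fin K2` represents jump size `l + 1`). -/
def jointTheta (K1 K2 a n : ℕ) : Finset ((Fin K1 → ℕ) × (Fin K2 → ℕ)) :=
  ((Fintype.piFinset fun _ : Fin K1 => Finset.range (a + 1)) ×ˢ
      (Fintype.piFinset fun _ : Fin K2 => Finset.range (n + 1))).filter
    fun p => (∑ j : Fin K1, p.1 j = a) ∧
      (∑ j : Fin K1, (j.1 + 1) * p.1 j) + (∑ l : Fin K2, (l.1 + 1) * p.2 l) = n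

/-- The joint probability mass function of the number of packets of jumps from a
tracked merging component (with rates `nu`) and the state of the merged GCP
(the other components contributing aggregated rates `rho`). -/
noncomputable def jointPMF (K1 K2 : ℕ) (nu : Fin K1 → ℝ) (rho : Fin K2 → ℝ)
    (a n : ℕ) (t : ℝ) : ℝ :=
  ∑ p ∈ jointTheta K1 K2 a n,
    (∏ j : Fin K1, (nu j * t) ^ (p.1 j) / (Nat.factorial (p.1 j))) *
      (∏ l : Fin K2, (rho l * t) ^ (p.2 l) / (Nat.factorial (p.2 l))) *
      Real.exp (-((∑ j : Fin K1, nu j) + ∑ l : Fin K2, rho l) * t)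

/-! ### Auxiliary lemmas -/

lemma summable_norm_pdf (c : ℝ) :
    Summable (fun m : ℕ => ‖c ^ m / (m.factorial : ℝ)‖) := by
  refine (Real.summable_pow_div_factorial |c|).congr fun m => ?_
  simp [Real.norm_eq_abs, abs_div, abs_pow]

lemma tsum_pdf (c : ℝ) :
    ∑' m : ℕ, c ^ m / (m.factorial : ℝ) = Real.exp c := by
  rw [Real.exp_eq_exp_ℝ, NormedSpace.exp_eq_tsum_div]

/-- Summability and value of the multi-dimensional exponential series. -/
lemma pi_key (K : ℕ) (c : Fin K → ℝ) :
    Summable (fun r : Fin K → ℕ => ‖∏ j, c j ^ r j / ((r j).factorial : ℝ)‖) ∧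
    ∑' r : Fin K → ℕ, ∏ j, c j ^ r j / ((r j).factorial : ℝ) = Real.exp (∑ j, c j) := by
  induction K with
  | zero =>
    constructor
    · exact .of_finite
    · rw [tsum_eq_single (fun _ => 0) (fun b hb => absurd (Subsingleton.elim b _) hb)]
      simp
  | succ K ih =>
    obtain ⟨ihS, ihT⟩ := ih fun j => c j.succ
    have h0 := summable_norm_pdf (c 0)
    set F : (Fin (K+1) → ℕ) → ℝ := fun r => ∏ j, c j ^ r j / ((r j).factorial : ℝ) with hF
    set e : ℕ × (Fin K → ℕ) ≃ (Fin (K+1) → ℕ) := Fin.consEquiv (fun _ => ℕ) with he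
    have hcomp : ∀ z : ℕ × (Fin K → ℕ), F (e z)
        = (c 0 ^ z.1 / (z.1.factorial : ℝ)) *
          ∏ j : Fin K, c j.succ ^ z.2 j / ((z.2 j).factorial : ℝ) := by
      intro z
      rw [hF]
      simp only [he, Fin.consEquiv_apply, Fin.prod_univ_succ, Fin.cons_zero, Fin.cons_succ]
    constructor
    · rw [← e.summable_iff]
      have h1 := Summable.mul_norm (R := ℝ) h0 ihS
      exact h1.congr fun z => by
        rw [Function.comp_apply]; exact congrArg norm (hcomp z).symm
    · rw [← e.tsum_eq F, tsum_congr hcomp,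
        ← tsum_mul_tsum_of_summable_norm h0 ihS, tsum_pdf, ihT,
        ← Real.exp_add, ← Fin.sum_univ_succ]

/-- The full fiber over `n` of the weight map. -/
def fiberT (K1 K2 n : ℕ) : Finset ((Fin K1 → ℕ) × (Fin K2 → ℕ)) :=
  ((Fintype.piFinset fun _ : Fin K1 => Finset.range (n + 1)) ×ˢ
      (Fintype.piFinset fun _ : Fin K2 => Finset.range (n + 1))).filter
    fun p => (∑ j : Fin K1, (j.1 + 1) * p.1 j) + (∑ l : Fin K2, (l.1 + 1) * p.2 l) = n

lemma weight_le₁ {K1 K2 n : ℕ} {p : (Fin K1 → ℕ) × (Fin K2 → ℕ)}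
    (h : (∑ j : Fin K1, (j.1 + 1) * p.1 j) + (∑ l : Fin K2, (l.1 + 1) * p.2 l) = n)
    (j : Fin K1) : p.1 j ≤ n := by
  calc p.1 j ≤ (j.1 + 1) * p.1 j := Nat.le_mul_of_pos_left _ (Nat.succ_pos _)
    _ ≤ ∑ j' : Fin K1, (j'.1 + 1) * p.1 j' :=
        Finset.single_le_sum (f := fun j' : Fin K1 => (j'.1 + 1) * p.1 j')
          (fun _ _ => Nat.zero_le _) (mem_univ j)
    _ ≤ n := h ▸ Nat.le_add_right _ _

lemma weight_le₂ {K1 K2 n : ℕ} {p : (Fin K1 → ℕ) × (Fin K2 → ℕ)}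
    (h : (∑ j : Fin K1, (j.1 + 1) * p.1 j) + (∑ l : Fin K2, (l.1 + 1) * p.2 l) = n)
    (l : Fin K2) : p.2 l ≤ n := by
  calc p.2 l ≤ (l.1 + 1) * p.2 l := Nat.le_mul_of_pos_left _ (Nat.succ_pos _)
    _ ≤ ∑ l' : Fin K2, (l'.1 + 1) * p.2 l' :=
        Finset.single_le_sum (f := fun l' : Fin K2 => (l'.1 + 1) * p.2 l')
          (fun _ _ => Nat.zero_le _) (mem_univ l)
    _ ≤ n := h ▸ Nat.le_add_left _ _

lemma sum_le_weight {K1 K2 n : ℕ} {p : (Fin K1 → ℕ) × (Fin K2 → ℕ)}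
    (h : (∑ j : Fin K1, (j.1 + 1) * p.1 j) + (∑ l : Fin K2, (l.1 + 1) * p.2 l) = n) :
    ∑ j : Fin K1, p.1 j ≤ n := by
  calc ∑ j : Fin K1, p.1 j ≤ ∑ j : Fin K1, (j.1 + 1) * p.1 j :=
        Finset.sum_le_sum fun j _ => Nat.le_mul_of_pos_left _ (Nat.succ_pos _)
    _ ≤ n := h ▸ Nat.le_add_right _ _

lemma mem_fiberT {K1 K2 n : ℕ} {p : (Fin K1 → ℕ) × (Fin K2 → ℕ)} :
    p ∈ fiberT K1 K2 n ↔
      (∑ j : Fin K1, (j.1 + 1) * p.1 j) + (∑ l : Fin K2, (l.1 + 1) * p.2 l) = n := by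
  constructor
  · exact fun h => (Finset.mem_filter.mp h).2
  · intro h
    refine Finset.mem_filter.mpr ⟨Finset.mem_product.mpr ⟨?_, ?_⟩, h⟩
    · exact Fintype.mem_piFinset.mpr fun j =>
        Finset.mem_range.mpr (Nat.lt_succ_of_le (weight_le₁ h j))
    · exact Fintype.mem_piFinset.mpr fun l =>
        Finset.mem_range.mpr (Nat.lt_succ_of_le (weight_le₂ h l))

lemma mem_jointTheta {K1 K2 a n : ℕ} {p : (Fin K1 → ℕ) × (Fin K2 → ℕ)} :
    p ∈ jointTheta K1 K2 a n ↔ (∑ j : Fin K1, p.1 j = a) ∧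
      (∑ j : Fin K1, (j.1 + 1) * p.1 j) + (∑ l : Fin K2, (l.1 + 1) * p.2 l) = n := by
  constructor
  · exact fun h => (Finset.mem_filter.mp h).2
  · rintro ⟨h1, h2⟩
    refine Finset.mem_filter.mpr ⟨Finset.mem_product.mpr ⟨?_, ?_⟩, h1, h2⟩
    · refine Fintype.mem_piFinset.mpr fun j => Finset.mem_range.mpr (Nat.lt_succ_of_le ?_)
      exact h1 ▸ Finset.single_le_sum (f := fun j' : Fin K1 => p.1 j')
        (fun _ _ => Nat.zero_le _) (mem_univ j)
    · exact Fintype.mem_piFinset.mpr fun l =>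
        Finset.mem_range.mpr (Nat.lt_succ_of_le (weight_le₂ h2 l))

lemma filter_fiberT (K1 K2 a n : ℕ) :
    (fiberT K1 K2 n).filter (fun p => ∑ j : Fin K1, p.1 j = a) = jointTheta K1 K2 a n := by
  ext p
  rw [Finset.mem_filter, mem_fiberT, mem_jointTheta]
  tauto

lemma sum_range_theta (K1 K2 n : ℕ) (f : (Fin K1 → ℕ) × (Fin K2 → ℕ) → ℝ) :
    ∑ a ∈ Finset.range (n + 1), ∑ p ∈ jointTheta K1 K2 a n, f p
      = ∑ p ∈ fiberT K1 K2 n, f p := by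
  rw [← Finset.sum_fiberwise_of_maps_to (g := fun p => ∑ j : Fin K1, p.1 j)
    (t := Finset.range (n + 1)) (fun p hp =>
      Finset.mem_range.mpr (Nat.lt_succ_of_le (sum_le_weight (mem_fiberT.mp hp)))) f]
  exact Finset.sum_congr rfl fun a _ => by rw [filter_fiberT]

lemma preimage_fiberT (K1 K2 n : ℕ) :
    (fun p : (Fin K1 → ℕ) × (Fin K2 → ℕ) =>
        (∑ j : Fin K1, (j.1 + 1) * p.1 j) + (∑ l : Fin K2, (l.1 + 1) * p.2 l)) ⁻¹' {n}
      = ↑(fiberT K1 K2 n) := by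
  ext p
  simp [mem_fiberT]

lemma G_eq_on_theta {K1 K2 a n : ℕ} (nu : Fin K1 → ℝ) (rho : Fin K2 → ℝ)
    (u v t E : ℝ) {p : (Fin K1 → ℕ) × (Fin K2 → ℕ)} (hp : p ∈ jointTheta K1 K2 a n) :
    (∏ j : Fin K1, (nu j * t * (u * v ^ (j.1 + 1))) ^ p.1 j / ((p.1 j).factorial : ℝ)) *
      ((∏ l : Fin K2, (rho l * t * v ^ (l.1 + 1)) ^ p.2 l / ((p.2 l).factorial : ℝ)) * E)
    = (∏ j : Fin K1, (nu j * t) ^ p.1 j / ((p.1 j).factorial : ℝ)) *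
        (∏ l : Fin K2, (rho l * t) ^ p.2 l / ((p.2 l).factorial : ℝ)) * E * u ^ a * v ^ n := by
  obtain ⟨h1, h2⟩ := mem_jointTheta.mp hp
  have hA : (∏ j : Fin K1, (nu j * t * (u * v ^ (j.1 + 1))) ^ p.1 j / ((p.1 j).factorial : ℝ))
      = (∏ j : Fin K1, (nu j * t) ^ p.1 j / ((p.1 j).factorial : ℝ)) *
        (u ^ a * v ^ (∑ j : Fin K1, (j.1 + 1) * p.1 j)) := by
    rw [← h1, ← Finset.prod_pow_eq_pow_sum, ← Finset.prod_pow_eq_pow_sum,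
      ← Finset.prod_mul_distrib, ← Finset.prod_mul_distrib]
    refine Finset.prod_congr rfl fun j _ => ?_
    rw [pow_mul]
    ring
  have hB : (∏ l : Fin K2, (rho l * t * v ^ (l.1 + 1)) ^ p.2 l / ((p.2 l).factorial : ℝ))
      = (∏ l : Fin K2, (rho l * t) ^ p.2 l / ((p.2 l).factorial : ℝ)) *
        v ^ (∑ l : Fin K2, (l.1 + 1) * p.2 l) := by
    rw [← Finset.prod_pow_eq_pow_sum, ← Finset.prod_mul_distrib]
    refine Finset.prod_congr rfl fun l _ => ?_
    rw [pow_mul]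
    ring
  rw [hA, hB, ← h2, pow_add]
  ring

/-- The joint probability generating function of the number of packets from the
tracked component and of the state of the merged GCP: for `|u| ≤ 1`, `|v| ≤ 1`,
`Σ_n Σ_{a ≤ n} q(a,n,t) u^a v^n = exp((−Λ + Σ_j ν_j u v^j + Σ_l ρ_l v^l) t)`,
the double series converging absolutely. -/
theorem jointPMF_pgf (K1 K2 : ℕ) (hK1 : 1 ≤ K1) (hK2 : 1 ≤ K2)
    (nu : Fin K1 → ℝ) (rho : Fin K2 → ℝ)
    (hnu : ∀ j, 0 ≤ nu j) (hrho : ∀ l, 0 ≤ rho l)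
    (u v t : ℝ) (hu : |u| ≤ 1) (hv : |v| ≤ 1) (ht : 0 ≤ t) :
    Summable (fun n : ℕ =>
      ∑ a ∈ Finset.range (n + 1), |jointPMF K1 K2 nu rho a n t * u ^ a * v ^ n|) ∧
    ∑' n : ℕ, (∑ a ∈ Finset.range (n + 1), jointPMF K1 K2 nu rho a n t * u ^ a * v ^ n)
      = Real.exp ((-((∑ j : Fin K1, nu j) + ∑ l : Fin K2, rho l)
          + (∑ j : Fin K1, nu j * u * v ^ (j.1 + 1))
          + (∑ l : Fin K2, rho l * v ^ (l.1 + 1))) * t) := by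
  classical
  set E : ℝ := Real.exp (-((∑ j : Fin K1, nu j) + ∑ l : Fin K2, rho l) * t) with hE
  set G : (Fin K1 → ℕ) × (Fin K2 → ℕ) → ℝ := fun p =>
    (∏ j : Fin K1, (nu j * t * (u * v ^ (j.1 + 1))) ^ p.1 j / ((p.1 j).factorial : ℝ)) *
      ((∏ l : Fin K2, (rho l * t * v ^ (l.1 + 1)) ^ p.2 l / ((p.2 l).factorial : ℝ)) * E)
    with hG
  obtain ⟨hAs, hAt⟩ := pi_key K1 (fun j => nu j * t * (u * v ^ (j.1 + 1)))
  obtain ⟨hBs, hBt⟩ := pi_key K2 (fun l => rho l * t * v ^ (l.1 + 1))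
  have hBEs : Summable (fun s : Fin K2 → ℕ =>
      ‖(∏ l : Fin K2, (rho l * t * v ^ (l.1 + 1)) ^ s l / ((s l).factorial : ℝ)) * E‖) :=
    (hBs.mul_right ‖E‖).congr fun s => (norm_mul _ _).symm
  have hGnorm : Summable (fun p => ‖G p‖) :=
    (Summable.mul_norm hAs hBEs).congr fun z => by rw [hG]
  have hGsum : Summable G := hGnorm.of_norm
  -- the value of the total sum
  have hGt : ∑' p, G p = Real.exp ((-((∑ j : Fin K1, nu j) + ∑ l : Fin K2, rho l)
      + (∑ j : Fin K1, nu j * u * v ^ (j.1 + 1))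
      + (∑ l : Fin K2, rho l * v ^ (l.1 + 1))) * t) := by
    have h1 : ∑' p, G p
        = (∑' r : Fin K1 → ℕ, ∏ j : Fin K1,
            (nu j * t * (u * v ^ (j.1 + 1))) ^ r j / ((r j).factorial : ℝ)) *
          (∑' s : Fin K2 → ℕ, (∏ l : Fin K2,
            (rho l * t * v ^ (l.1 + 1)) ^ s l / ((s l).factorial : ℝ)) * E) := by
      rw [tsum_mul_tsum_of_summable_norm hAs hBEs]
    rw [h1, tsum_mul_right, hAt, hBt, hE, ← Real.exp_add, ← Real.exp_add]
    congr 1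
    have hsc : ∑ j : Fin K1, nu j * t * (u * v ^ (j.1 + 1))
        = (∑ j : Fin K1, nu j * u * v ^ (j.1 + 1)) * t := by
      rw [Finset.sum_mul]
      exact Finset.sum_congr rfl fun j _ => by ring
    have hsd : ∑ l : Fin K2, rho l * t * v ^ (l.1 + 1)
        = (∑ l : Fin K2, rho l * v ^ (l.1 + 1)) * t := by
      rw [Finset.sum_mul]
      exact Finset.sum_congr rfl fun l _ => by ring
    rw [hsc, hsd]
    ring
  -- fiberwise sums
  have hfib_eq : ∀ (f : (Fin K1 → ℕ) × (Fin K2 → ℕ) → ℝ) (n : ℕ),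
      (∑' p : (fun p : (Fin K1 → ℕ) × (Fin K2 → ℕ) =>
          (∑ j : Fin K1, (j.1 + 1) * p.1 j) + (∑ l : Fin K2, (l.1 + 1) * p.2 l)) ⁻¹' {n}, f p)
        = ∑ p ∈ fiberT K1 K2 n, f p := by
    intro f n
    rw [preimage_fiberT, Finset.tsum_subtype']
  -- jointPMF term as a Θ-sum of G
  have hJ : ∀ n a, jointPMF K1 K2 nu rho a n t * u ^ a * v ^ n
      = ∑ p ∈ jointTheta K1 K2 a n, G p := by
    intro n a
    rw [jointPMF, Finset.sum_mul, Finset.sum_mul]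
    refine Finset.sum_congr rfl fun p hp => ?_
    rw [hG, hE]
    exact (G_eq_on_theta nu rho u v t _ hp).symm
  -- the inner sums
  have hinner : ∀ n : ℕ, ∑ a ∈ Finset.range (n + 1),
      jointPMF K1 K2 nu rho a n t * u ^ a * v ^ n = ∑ p ∈ fiberT K1 K2 n, G p := by
    intro n
    rw [← sum_range_theta K1 K2 n G]
    exact Finset.sum_congr rfl fun a _ => hJ n a
  have hfib := hGsum.hasSum.tsum_fiberwise (fun p : (Fin K1 → ℕ) × (Fin K2 → ℕ) =>
    (∑ j : Fin K1, (j.1 + 1) * p.1 j) + (∑ l : Fin K2, (l.1 + 1) * p.2 l))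
  have hfun : (fun n : ℕ => ∑' p : (fun p : (Fin K1 → ℕ) × (Fin K2 → ℕ) =>
        (∑ j : Fin K1, (j.1 + 1) * p.1 j) + (∑ l : Fin K2, (l.1 + 1) * p.2 l)) ⁻¹' {n}, G p)
      = fun n : ℕ => ∑ a ∈ Finset.range (n + 1),
          jointPMF K1 K2 nu rho a n t * u ^ a * v ^ n :=
    funext fun n => by rw [hfib_eq G n, hinner n]
  rw [hfun] at hfib
  constructor
  · -- absolute summability
    have hfibn := hGnorm.hasSum.tsum_fiberwise (fun p : (Fin K1 → ℕ) × (Fin K2 → ℕ) =>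
      (∑ j : Fin K1, (j.1 + 1) * p.1 j) + (∑ l : Fin K2, (l.1 + 1) * p.2 l))
    have hMaj : Summable (fun n : ℕ => ∑ p ∈ fiberT K1 K2 n, ‖G p‖) :=
      hfibn.summable.congr fun n => hfib_eq (fun p => ‖G p‖) n
    refine Summable.of_nonneg_of_le
      (fun n => Finset.sum_nonneg fun a _ => abs_nonneg _) (fun n => ?_) hMaj
    calc ∑ a ∈ Finset.range (n + 1), |jointPMF K1 K2 nu rho a n t * u ^ a * v ^ n|
        = ∑ a ∈ Finset.range (n + 1), |∑ p ∈ jointTheta K1 K2 a n, G p| :=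
          Finset.sum_congr rfl fun a _ => by rw [hJ n a]
      _ ≤ ∑ a ∈ Finset.range (n + 1), ∑ p ∈ jointTheta K1 K2 a n, |G p| :=
          Finset.sum_le_sum fun a _ => Finset.abs_sum_le_sum_abs _ _
      _ = ∑ p ∈ fiberT K1 K2 n, |G p| := sum_range_theta K1 K2 n fun p => |G p|
      _ = ∑ p ∈ fiberT K1 K2 n, ‖G p‖ :=
          Finset.sum_congr rfl fun p _ => (Real.norm_eq_abs _).symm
  · rw [hfib.tsum_eq, hGt]
end

section
/- Let λ = (λ_1,…,λ_k) be a nonnegative rate vector, 0 ≤ ρ ≤ 1, t ≥ 0, and n₁, n₂ ∈ ℕ₀. Then Σ_{Θ(k,n₁,n₂)} ∏_{j=1}^{k} ( (x_j + y_j choose x_j) ρ^{x_j} (1−ρ)^{y_j} (λ_j t)^{x_j + y_j} / (x_j + y_j)! · e^{−λ_j t} ) = p(ρλ; n₁, t) · p((1−ρ)λ; n₂, t), where Θ(k,n₁,n₂) = {(x,y) ∈ ℕ₀^k × ℕ₀^k : Σ_{j=1}^k j·x_j = n₁ and Σ_{j=1}^k j·y_j = n₂}, ρλ = (ρλ_1,…,ρλ_k)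 and (1−ρ)λ = ((1−ρ)λ_1,…,(1−ρ)λ_k). In words: when each jump of a GCP is routed to a first split component with probability ρ and to a second with probability 1−ρ by independent coin flips, the joint law of the two split components at time t factorizes into the product of two GCP laws with rates ρλ_j and (1−ρ)λ_j; hence the split components are independent GCPs. -/
open Finset

/-!
The joint weight of routing `x + y` Poisson jumps of one size as `x` to the first and `y` to the
second component is, by `(x + y).choose x = (x + y)! / (x! y!)` and
`e^{-λt} = e^{-ρλt} e^{-(1-ρ)λt}`, the product of two Poisson weights with rates `ρλ` and `(1-ρ)λ`.
Multiplying over the jump sizes and summing over `Ω(k, n₁) × Ω(k, n₂)` gives the product of the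
two GCP probabilities.
-/

theorem add_choose_mul_pow_mul_pow_div_factorial {K : Type*} [Field K] [CharZero K] (a b : K)
    (x y : ℕ) :
    (x + y).choose x * a ^ x * b ^ y / (x + y).factorial
      = a ^ x / x.factorial * (b ^ y / y.factorial) := by
  have hfact (n : ℕ) : (n.factorial : K) ≠ 0 := Nat.cast_ne_zero.2 n.factorial_ne_zero
  rw [Nat.cast_add_choose]
  field_simp [hfact]

theorem binomial_mul_poisson_eq_poisson_mul_poisson (ρ l t : ℝ) (x y : ℕ) :
    (x + y).choose x * ρ ^ x * (1 - ρ) ^ y * (l * t) ^ (x + y) / (x + y).factorial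
        * Real.exp (-(l * t))
      = (ρ * l * t) ^ x / x.factorial * Real.exp (-(ρ * l * t))
        * (((1 - ρ) * l * t) ^ y / y.factorial * Real.exp (-((1 - ρ) * l * t))) := by
  have hexp : Real.exp (-(l * t)) = Real.exp (-(ρ * l * t)) * Real.exp (-((1 - ρ) * l * t)) := by
    rw [← Real.exp_add]
    ring_nf
  have hpow : (x + y).choose x * ρ ^ x * (1 - ρ) ^ y * (l * t) ^ (x + y)
      = (x + y).choose x * (ρ * l * t) ^ x * ((1 - ρ) * l * t) ^ y := by
    simp only [mul_pow, pow_add]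
    ring
  rw [hexp, hpow, add_choose_mul_pow_mul_pow_div_factorial]
  ring

theorem filter_piFinset_product_eq_gcpOmega_product (k n₁ n₂ : ℕ) :
    ((Fintype.piFinset fun _ : Fin k => Finset.range (n₁ + 1)) ×ˢ
        (Fintype.piFinset fun _ : Fin k => Finset.range (n₂ + 1))).filter
        (fun p => (∑ j : Fin k, (j.1 + 1) * p.1 j = n₁) ∧
          (∑ j : Fin k, (j.1 + 1) * p.2 j = n₂))
      = gcpOmega k n₁ ×ˢ gcpOmega k n₂ := by
  ext p
  simp only [mem_filter, mem_product, gcpOmega]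
  tauto

theorem type_I_splitting_two_components_general (k : ℕ) (lam : Fin k → ℝ) (ρ : ℝ) (t : ℝ) (n₁ n₂ : ℕ) :
    ∑ p ∈ ((Fintype.piFinset fun _ : Fin k => Finset.range (n₁ + 1)) ×ˢ
        (Fintype.piFinset fun _ : Fin k => Finset.range (n₂ + 1))).filter
        (fun p => (∑ j : Fin k, (j.1 + 1) * p.1 j = n₁) ∧
          (∑ j : Fin k, (j.1 + 1) * p.2 j = n₂)),
      ∏ j : Fin k,
        ((Nat.choose (p.1 j + p.2 j) (p.1 j)) * ρ ^ (p.1 j) * (1 - ρ) ^ (p.2 j) *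
          (lam j * t) ^ (p.1 j + p.2 j) / (Nat.factorial (p.1 j + p.2 j)) *
          Real.exp (-(lam j * t)))
      = gcpPMF k (fun j => ρ * lam j) n₁ t * gcpPMF k (fun j => (1 - ρ) * lam j) n₂ t := by
  rw [filter_piFinset_product_eq_gcpOmega_product, gcpPMF, gcpPMF, sum_mul_sum, sum_product]
  refine sum_congr rfl fun x _ => sum_congr rfl fun y _ => ?_
  rw [← prod_mul_distrib]
  exact prod_congr rfl fun j _ => binomial_mul_poisson_eq_poisson_mul_poisson ρ (lam j) t (x j) (y j)

/-- When each jump of a GCP with rates `lam` is routed to a first split component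
with probability `ρ` and to a second with probability `1 − ρ` by independent coin
flips, the joint law of the two split components at time `t` factorizes into the
product of two GCP laws with rates `ρ λ_j` and `(1−ρ) λ_j`: the split components
are independent GCPs. -/
theorem type_I_splitting_two_components (k : ℕ) (hk : 1 ≤ k) (lam : Fin k → ℝ)
    (hlam : ∀ j, 0 ≤ lam j) (ρ : ℝ) (hρ0 : 0 ≤ ρ) (hρ1 : ρ ≤ 1)
    (t : ℝ) (ht : 0 ≤ t) (n₁ n₂ : ℕ) :
    ∑ p ∈ ((Fintype.piFinset fun _ : Fin k => Finset.range (n₁ + 1)) ×ˢ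
        (Fintype.piFinset fun _ : Fin k => Finset.range (n₂ + 1))).filter
        (fun p => (∑ j : Fin k, (j.1 + 1) * p.1 j = n₁) ∧
          (∑ j : Fin k, (j.1 + 1) * p.2 j = n₂)),
      ∏ j : Fin k,
        ((Nat.choose (p.1 j + p.2 j) (p.1 j)) * ρ ^ (p.1 j) * (1 - ρ) ^ (p.2 j) *
          (lam j * t) ^ (p.1 j + p.2 j) / (Nat.factorial (p.1 j + p.2 j)) *
          Real.exp (-(lam j * t)))
      = gcpPMF k (fun j => ρ * lam j) n₁ t * gcpPMF k (fun j => (1 - ρ) * lam j) n₂ t :=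
  type_I_splitting_two_components_general k lam ρ t n₁ n₂
end

section
/- Let λ = (λ_1,…,λ_k) be a nonnegative rate vector, let ρ_1,…,ρ_q ≥ 0 with Σ_{i=1}^q ρ_i = 1, let t ≥ 0, and let n_1,…,n_q ∈ ℕ₀. Then Σ_{Θ} ∏_{j=1}^{k} ( ( (Σ_{i=1}^q x^{(i)}_j)! / ∏_{i=1}^q x^{(i)}_j! ) · ∏_{i=1}^q ρ_i^{x^{(i)}_j} · (λ_j t)^{Σ_i x^{(i)}_j} / (Σ_i x^{(i)}_j)! · e^{−λ_j t} ) = ∏_{i=1}^{q} p(ρ_i λ; n_i, t), where Θ = {(x^{(1)},…,x^{(q)}) ∈ (ℕ₀^k)^q : Σ_{j=1}^k j·x^{(i)}_j = n_i for every i}, and ρ_i λ = (ρ_i λ_1,…,ρ_i λ_k). In words: when each jump of a GCP is routed to the i-th of q split components with probability ρ_i by independent rolls of a q-faced die, the split components are independent GCPs with rates ρ_i λ_j. -/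
open Finset

/-! The index set `Θ` is the product of the sets `Ω(k, n_i)`, so the right-hand side, a product
of sums over these sets, expands into a sum over `Θ` of products. For fixed `x ∈ Θ`, exchanging the
products over `i` and `j` leaves, for each jump size `j`, the Poisson thinning identity: `q`
independent Poisson counts of means `ρ_i λ_j t` have the law of one Poisson count of mean
`λ_j t` split multinomially with probabilities `ρ_i`, where `∑ ρ_i = 1` recombines the exponentials. -/

theorem piFinset_filter_sum_eq_piFinset_gcpOmega (k q : ℕ) (n : Fin q → ℕ) :
    (Fintype.piFinset fun i : Fin q =>
        Fintype.piFinset fun _ : Fin k => Finset.range (n i + 1)).filter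
        (fun x => ∀ i : Fin q, ∑ j : Fin k, (j.1 + 1) * x i j = n i)
      = Fintype.piFinset fun i : Fin q => gcpOmega k (n i) := by
  ext x
  simp only [Finset.mem_filter, Fintype.mem_piFinset, gcpOmega, forall_and]

theorem prod_exp_neg_mul_of_sum_eq_one {ι : Type*} [Fintype ι] {ρ : ι → ℝ}
    (hρ : ∑ i, ρ i = 1) (a : ℝ) :
    ∏ i, Real.exp (-(ρ i * a)) = Real.exp (-a) := by
  rw [← Real.exp_sum, sum_neg_distrib, ← sum_mul, hρ, one_mul]

theorem prod_poisson_eq_multinomial_split {ι : Type*} [Fintype ι] {ρ : ι → ℝ}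
    (hρ : ∑ i, ρ i = 1) (a : ℝ) (m : ι → ℕ) :
    ∏ i, (ρ i * a) ^ m i / (m i).factorial * Real.exp (-(ρ i * a))
      = ((∑ i, m i).factorial : ℝ) / (∏ i, ((m i).factorial : ℝ)) * (∏ i, ρ i ^ m i) *
          a ^ (∑ i, m i) / (∑ i, m i).factorial * Real.exp (-a) := by
  have hpow : ∏ i, (ρ i * a) ^ m i = (∏ i, ρ i ^ m i) * a ^ (∑ i, m i) := by
    simp only [mul_pow, prod_mul_distrib, prod_pow_eq_pow_sum]
  have htotal : ((∑ i, m i).factorial : ℝ) ≠ 0 := by positivity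
  have hparts : ∏ i, ((m i).factorial : ℝ) ≠ 0 := by positivity
  rw [prod_mul_distrib, prod_exp_neg_mul_of_sum_eq_one hρ, prod_div_distrib, hpow]
  field_simp

theorem type_I_splitting_q_components_general (k : ℕ) (q : ℕ)
    (lam : Fin k → ℝ)
    (ρ : Fin q → ℝ) (hρsum : ∑ i : Fin q, ρ i = 1)
    (t : ℝ) (n : Fin q → ℕ) :
    ∑ x ∈ (Fintype.piFinset fun i : Fin q =>
        Fintype.piFinset fun _ : Fin k => Finset.range (n i + 1)).filter
        (fun x => ∀ i : Fin q, ∑ j : Fin k, (j.1 + 1) * x i j = n i),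
      ∏ j : Fin k,
        ((Nat.factorial (∑ i : Fin q, x i j) : ℝ) /
            (∏ i : Fin q, (Nat.factorial (x i j) : ℝ)) *
          (∏ i : Fin q, ρ i ^ (x i j)) *
          (lam j * t) ^ (∑ i : Fin q, x i j) / (Nat.factorial (∑ i : Fin q, x i j)) *
          Real.exp (-(lam j * t)))
      = ∏ i : Fin q, gcpPMF k (fun j => ρ i * lam j) (n i) t := by
  rw [piFinset_filter_sum_eq_piFinset_gcpOmega]
  simp only [gcpPMF]
  rw [prod_univ_sum]
  refine sum_congr rfl fun x _ => ?_
  rw [prod_comm]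
  refine prod_congr rfl fun j _ => ?_
  simpa only [mul_assoc] using (prod_poisson_eq_multinomial_split hρsum (lam j * t) (x · j)).symm

/-- When each jump of a GCP with rates `lam` is routed to the `i`-th of `q` split
components with probability `ρ i` by independent rolls of a `q`-faced die, the split
components are independent GCPs with rates `ρ_i λ_j`: the joint law factorizes. -/
theorem type_I_splitting_q_components (k : ℕ) (hk : 1 ≤ k) (q : ℕ) (hq : 1 ≤ q)
    (lam : Fin k → ℝ) (hlam : ∀ j, 0 ≤ lam j)
    (ρ : Fin q → ℝ) (hρ : ∀ i, 0 ≤ ρ i) (hρsum : ∑ i : Fin q, ρ i = 1)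
    (t : ℝ) (ht : 0 ≤ t) (n : Fin q → ℕ) :
    ∑ x ∈ (Fintype.piFinset fun i : Fin q =>
        Fintype.piFinset fun _ : Fin k => Finset.range (n i + 1)).filter
        (fun x => ∀ i : Fin q, ∑ j : Fin k, (j.1 + 1) * x i j = n i),
      ∏ j : Fin k,
        ((Nat.factorial (∑ i : Fin q, x i j) : ℝ) /
            (∏ i : Fin q, (Nat.factorial (x i j) : ℝ)) *
          (∏ i : Fin q, ρ i ^ (x i j)) *
          (lam j * t) ^ (∑ i : Fin q, x i j) / (Nat.factorial (∑ i : Fin q, x i j)) *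
          Real.exp (-(lam j * t)))
      = ∏ i : Fin q, gcpPMF k (fun j => ρ i * lam j) (n i) t :=
  type_I_splitting_q_components_general k q lam ρ hρsum t n
end

section
/- Let λ = (λ_1,…,λ_k) be a nonnegative rate vector, 0 ≤ ρ ≤ 1, and define the thinned rates μ_{j₁} = Σ_{j=j₁}^{k} (j choose j₁) ρ^{j₁}(1−ρ)^{j−j₁} λ_j for 1 ≤ j₁ ≤ k. Then for every n ∈ ℕ₀ and t ≥ 0, d/dt p(μ; n, t) = −( Σ_{j=1}^{k} λ_j (1 − (1−ρ)^j) ) p(μ; n, t) + Σ_{j=1}^{k} Σ_{j₁=1}^{j} λ_j (j choose j₁) ρ^{j₁}(1−ρ)^{j−j₁} p(μ; n−j₁, t), where p(μ; m, t) is taken to be 0 for m < 0, and the initial conditions p(μ; 0, 0) = 1 and p(μ; n, 0) = 0 for n ≥ 1 hold. In words: under Type II splitting (each of the j coin flips of a j-size jump routes one unit to the first component with probability ρ), the first split component is a GCP with jump rates μ_{j₁} and its state probabilities solve the stated system of differential equations. -/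
/-!
Write `p(ν; n, t) = e^{-(∑ ν) t} ∑_{x ∈ Ω(k,n)} c_ν(x) t^{|x|}` with
`c_ν(x) = ∏ ν_i^{x_i} / x_i!` and `|x| = ∑ x_i`. Differentiating `t^{|x|}` and splitting
`|x| = ∑_i x_i`, the shift `x ↦ x - e_i` (remove one jump of size `i`) turns
`∑_x c_ν(x) x_i t^{|x|-1}` into `ν_i` times the polynomial part at level `n - i`, since
`c_ν(x) x_i = ν_i c_ν(x - e_i)`. This is the forward equation
`p' = -(∑ ν) p + ∑_i ν_i p(n - i)` of any GCP. For the thinned rates `μ`, exchanging the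
order of summation rewrites `∑_{j₁} μ_{j₁} f(j₁)` as the double sum over `j ≥ j₁`, and for
`f ≡ 1` the binomial theorem gives `∑ μ = ∑_j λ_j (1 - (1 - ρ)^j)`.
-/

open Finset

theorem Fintype.sum_mul_add_single {ι R : Type*} [Fintype ι] [DecidableEq ι] [CommSemiring R]
    (a x : ι → R) (i : ι) :
    ∑ j, a j * (x + Pi.single i 1 : ι → R) j = ∑ j, a j * x j + a i := by
  simp [mul_add, Finset.sum_add_distrib, Pi.single_apply]

theorem Fin.sum_ite_le_eq_sum_Icc {M : Type*} [AddCommMonoid M] {k : ℕ} (j : Fin k)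
    (g : ℕ → M) :
    ∑ i : Fin k, (if i ≤ j then g (i.1 + 1) else 0) = ∑ m ∈ Icc 1 (j.1 + 1), g m := by
  have hrange : (range k).filter (· ≤ j.1) = range (j.1 + 1) := by
    ext m
    simp only [Finset.mem_filter, Finset.mem_range]
    omega
  simp only [Fin.le_iff_val_le_val]
  rw [Fin.sum_univ_eq_sum_range (fun m => if m ≤ j.1 then g (m + 1) else 0),
    ← Finset.sum_filter, hrange, ← Finset.Ico_add_one_right_eq_Icc, Finset.sum_Ico_eq_sum_range,
    Nat.add_sub_cancel]
  simp only [add_comm 1]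

theorem sum_Icc_choose_mul_pow_mul_one_sub_pow {R : Type*} [CommRing R] (ρ : R) (N : ℕ) :
    ∑ m ∈ Icc 1 N, (N.choose m : R) * ρ ^ m * (1 - ρ) ^ (N - m) = 1 - (1 - ρ) ^ N := by
  have h := add_pow ρ (1 - ρ) N
  rw [add_sub_cancel, one_pow, Finset.range_eq_Ico,
    Finset.sum_eq_sum_Ico_succ_bot (Nat.succ_pos N), Nat.succ_eq_add_one,
    Finset.Ico_add_one_right_eq_Icc] at h
  simp only [zero_add, pow_zero, one_mul, Nat.sub_zero, Nat.choose_zero_right, Nat.cast_one,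
    mul_one] at h
  rw [Finset.sum_congr rfl fun m _ => mul_rotate (N.choose m : R) (ρ ^ m) ((1 - ρ) ^ (N - m))]
  linear_combination -h

noncomputable def gcpCoeff {k : ℕ} (ν : Fin k → ℝ) (x : Fin k → ℕ) : ℝ :=
  ∏ j, ν j ^ x j / (x j).factorial

noncomputable def gcpPoly (k : ℕ) (ν : Fin k → ℝ) (n : ℕ) (t : ℝ) : ℝ :=
  ∑ x ∈ gcpOmega k n, gcpCoeff ν x * t ^ ∑ j, x j

theorem add_single_mem_gcpOmega_iff {k m : ℕ} {y : Fin k → ℕ} {i : Fin k} :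
    y + Pi.single i 1 ∈ gcpOmega k (m + (i.1 + 1)) ↔ y ∈ gcpOmega k m := by
  rw [mem_gcpOmega, mem_gcpOmega, Fintype.sum_mul_add_single (fun j : Fin k => j.1 + 1)]
  exact Nat.add_right_cancel_iff

theorem gcpCoeff_add_single {k : ℕ} (ν : Fin k → ℝ) (y : Fin k → ℕ) (i : Fin k) :
    gcpCoeff ν (y + Pi.single i 1) * (y i + 1) = ν i * gcpCoeff ν y := by
  unfold gcpCoeff
  rw [← Finset.mul_prod_erase _ _ (mem_univ i), ← Finset.mul_prod_erase _ _ (mem_univ i)]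
  have hrest : ∀ j ∈ univ.erase i,
      ν j ^ (y + Pi.single i 1 : Fin k → ℕ) j / ((y + Pi.single i 1 : Fin k → ℕ) j).factorial
      = ν j ^ y j / (y j).factorial := fun j hj => by
    simp [(Finset.mem_erase.mp hj).1]
  rw [Finset.prod_congr rfl hrest]
  simp only [Pi.add_apply, Pi.single_eq_same, Nat.factorial_succ, Nat.cast_mul, pow_succ]
  field_simp
  push_cast
  ring

theorem coord_eq_zero_of_mem_gcpOmega {k n : ℕ} {x : Fin k → ℕ} (hx : x ∈ gcpOmega k n)
    {i : Fin k} (hi : n < i.1 + 1) : x i = 0 := by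
  have := Finset.single_le_sum (f := fun j : Fin k => (j.1 + 1) * x j) (by simp) (mem_univ i)
  rw [mem_gcpOmega.mp hx] at this
  nlinarith

theorem tsub_single_add_single_of_ne_zero {ι : Type*} [DecidableEq ι] {x : ι → ℕ} {i : ι}
    (hi : x i ≠ 0) : x - Pi.single i 1 + Pi.single i 1 = x :=
  tsub_add_cancel_of_le fun j => by
    rcases eq_or_ne j i with rfl | hj
    · simpa using Nat.one_le_iff_ne_zero.mpr hi
    · simp [hj]

theorem sum_gcpOmega_coeff_mul_coord (k n : ℕ) (ν : Fin k → ℝ) (t : ℝ) (i : Fin k) :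
    ∑ x ∈ gcpOmega k n, gcpCoeff ν x * (x i * t ^ (∑ j, x j - 1)) =
      ν i * if i.1 + 1 ≤ n then gcpPoly k ν (n - (i.1 + 1)) t else 0 := by
  split_ifs with hn
  · obtain ⟨m, rfl⟩ : ∃ m, n = m + (i.1 + 1) := ⟨n - (i.1 + 1), by omega⟩
    rw [Nat.add_sub_cancel, gcpPoly, Finset.mul_sum,
      ← Finset.sum_filter_of_ne (p := fun x => x i ≠ 0) fun x _ hx h0 => hx (by simp [h0])]
    symm
    refine Finset.sum_nbij' (· + Pi.single i 1) (· - Pi.single i 1) (fun y hy => ?_)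
      (fun x hx => ?_) (fun y _ => add_tsub_cancel_right y _)
      (fun x hx => tsub_single_add_single_of_ne_zero (Finset.mem_filter.mp hx).2) (fun y _ => ?_)
    · simp [Finset.mem_filter, add_single_mem_gcpOmega_iff.mpr hy]
    · obtain ⟨hx, hxi⟩ := Finset.mem_filter.mp hx
      rw [← tsub_single_add_single_of_ne_zero hxi] at hx
      exact add_single_mem_gcpOmega_iff.mp hx
    · have hcard := Fintype.sum_mul_add_single (fun _ => 1) y i
      simp only [one_mul] at hcard
      rw [hcard, Nat.add_sub_cancel, ← mul_assoc (gcpCoeff ν _), Pi.add_apply,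
        Pi.single_eq_same, Nat.cast_add, Nat.cast_one, gcpCoeff_add_single]
      ring
  · rw [mul_zero]
    refine Finset.sum_eq_zero fun x hx => ?_
    simp [coord_eq_zero_of_mem_gcpOmega hx (not_le.mp hn)]

theorem hasDerivAt_gcpPoly (k n : ℕ) (ν : Fin k → ℝ) (t : ℝ) :
    HasDerivAt (gcpPoly k ν n)
      (∑ i, ν i * if i.1 + 1 ≤ n then gcpPoly k ν (n - (i.1 + 1)) t else 0) t := by
  refine (HasDerivAt.fun_sum (u := gcpOmega k n) fun x _ =>
    (hasDerivAt_pow (∑ j, x j) t).const_mul (gcpCoeff ν x)).congr_deriv ?_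
  simp_rw [Nat.cast_sum, Finset.sum_mul, Finset.mul_sum]
  rw [Finset.sum_comm]
  exact Finset.sum_congr rfl fun i _ => sum_gcpOmega_coeff_mul_coord k n ν t i

theorem gcpPMF_eq_gcpPoly_mul_exp (k n : ℕ) (ν : Fin k → ℝ) (t : ℝ) :
    gcpPMF k ν n t = gcpPoly k ν n t * Real.exp (-(∑ j, ν j) * t) := by
  rw [gcpPMF, gcpPoly, Finset.sum_mul]
  refine Finset.sum_congr rfl fun x _ => ?_
  have hfactor : ∀ j, (ν j * t) ^ x j / (x j).factorial * Real.exp (-(ν j * t)) =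
      ν j ^ x j / (x j).factorial * t ^ x j * Real.exp (-(ν j * t)) := fun j => by ring
  simp_rw [hfactor, Finset.prod_mul_distrib, Finset.prod_pow_eq_pow_sum, ← Real.exp_sum]
  rw [gcpCoeff, neg_mul, Finset.sum_mul, ← Finset.sum_neg_distrib]

theorem hasDerivAt_gcpPMF (k n : ℕ) (ν : Fin k → ℝ) (t : ℝ) :
    HasDerivAt (gcpPMF k ν n)
      (-(∑ j, ν j) * gcpPMF k ν n t +
        ∑ i, ν i * if i.1 + 1 ≤ n then gcpPMF k ν (n - (i.1 + 1)) t else 0) t := by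
  have hexp : HasDerivAt (fun s => Real.exp (-(∑ j, ν j) * s))
      (Real.exp (-(∑ j, ν j) * t) * -(∑ j, ν j)) t := by
    simpa using ((hasDerivAt_id t).const_mul (-(∑ j, ν j))).exp
  refine (((hasDerivAt_gcpPoly k n ν t).mul hexp).congr_of_eventuallyEq
    (.of_forall (gcpPMF_eq_gcpPoly_mul_exp k n ν))).congr_deriv ?_
  rw [add_comm, Finset.sum_mul, gcpPMF_eq_gcpPoly_mul_exp]
  congr 1
  · ring
  · refine Finset.sum_congr rfl fun i _ => ?_
    split_ifs
    · rw [gcpPMF_eq_gcpPoly_mul_exp]; ring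
    · ring

theorem gcpPMF_time_zero (k n : ℕ) (ν : Fin k → ℝ) :
    gcpPMF k ν n 0 = if n = 0 then 1 else 0 := by
  have hpow : ∀ x : Fin k → ℕ, (0 : ℝ) ^ ∑ j, x j = if x = 0 then 1 else 0 := fun x => by
    simp [zero_pow_eq, Finset.sum_eq_zero_iff, funext_iff]
  simp_rw [gcpPMF_eq_gcpPoly_mul_exp, mul_zero, Real.exp_zero, mul_one, gcpPoly, hpow,
    mul_ite, mul_one, mul_zero, Finset.sum_ite_eq', mem_gcpOmega]
  simp [gcpCoeff, eq_comm]

noncomputable def thinnedRates {k : ℕ} (lam : Fin k → ℝ) (ρ : ℝ) (j₁ : Fin k) : ℝ :=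
  ∑ j : Fin k, if j₁ ≤ j then
    (Nat.choose (j.1 + 1) (j₁.1 + 1)) * ρ ^ (j₁.1 + 1) * (1 - ρ) ^ (j.1 - j₁.1) * lam j else 0

theorem sum_thinnedRates_mul {k : ℕ} (lam : Fin k → ℝ) (ρ : ℝ) (f : ℕ → ℝ) :
    ∑ i, thinnedRates lam ρ i * f (i.1 + 1) = ∑ j : Fin k, ∑ j₁ ∈ Icc 1 (j.1 + 1),
      lam j * (Nat.choose (j.1 + 1) j₁) * ρ ^ j₁ * (1 - ρ) ^ (j.1 + 1 - j₁) * f j₁ := by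
  simp_rw [thinnedRates, Finset.sum_mul, ite_mul, zero_mul]
  rw [Finset.sum_comm]
  refine Finset.sum_congr rfl fun j _ => ?_
  rw [← Fin.sum_ite_le_eq_sum_Icc j]
  refine Finset.sum_congr rfl fun i _ => ?_
  split_ifs
  · rw [Nat.add_sub_add_right]
    ring
  · rfl

theorem sum_thinnedRates {k : ℕ} (lam : Fin k → ℝ) (ρ : ℝ) :
    ∑ j, thinnedRates lam ρ j = ∑ j : Fin k, lam j * (1 - (1 - ρ) ^ (j.1 + 1)) := by
  have h := sum_thinnedRates_mul lam ρ fun _ => 1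
  simp only [mul_one] at h
  rw [h]
  refine Finset.sum_congr rfl fun j _ => ?_
  rw [← sum_Icc_choose_mul_pow_mul_one_sub_pow, Finset.mul_sum]
  exact Finset.sum_congr rfl fun m _ => by ring

theorem type_II_splitting_first_component_ode_general (k : ℕ)
    (lam : Fin k → ℝ) (ρ : ℝ)
    (mu : Fin k → ℝ)
    (hmu : ∀ j₁ : Fin k, mu j₁ = ∑ j : Fin k,
      if j₁ ≤ j then
        (Nat.choose (j.1 + 1) (j₁.1 + 1)) * ρ ^ (j₁.1 + 1) * (1 - ρ) ^ (j.1 - j₁.1) * lam j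
      else 0) :
    (∀ (n : ℕ) (t : ℝ), 0 ≤ t →
      HasDerivAt (fun s => gcpPMF k mu n s)
        (-(∑ j : Fin k, lam j * (1 - (1 - ρ) ^ (j.1 + 1))) * gcpPMF k mu n t
          + ∑ j : Fin k, ∑ j₁ ∈ Finset.Icc 1 (j.1 + 1),
              lam j * (Nat.choose (j.1 + 1) j₁) * ρ ^ j₁ * (1 - ρ) ^ (j.1 + 1 - j₁) *
                (if j₁ ≤ n then gcpPMF k mu (n - j₁) t else 0)) t) ∧
    gcpPMF k mu 0 0 = 1 ∧ (∀ n : ℕ, 1 ≤ n → gcpPMF k mu n 0 = 0) := by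
  obtain rfl : mu = thinnedRates lam ρ := funext hmu
  refine ⟨fun n t _ => ?_, by simp [gcpPMF_time_zero], fun n hn => by
    simp [gcpPMF_time_zero, Nat.one_le_iff_ne_zero.mp hn]⟩
  rw [← sum_thinnedRates, ← sum_thinnedRates_mul]
  exact hasDerivAt_gcpPMF k n _ t

/-- Under Type II splitting of a GCP with rates `lam` (each unit of a `j`-size jump
is routed to the first component with probability `ρ`), the first split component is
a GCP with thinned rates `μ_{j₁} = Σ_{j ≥ j₁} C(j, j₁) ρ^{j₁} (1−ρ)^{j−j₁} λ_j`
( jump sizes are represented by `j.1 + 1` for `j : Fin k`), and its state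
probabilities solve the stated system of differential equations with the stated
initial conditions. -/
theorem type_II_splitting_first_component_ode (k : ℕ) (hk : 1 ≤ k)
    (lam : Fin k → ℝ) (hlam : ∀ j, 0 ≤ lam j) (ρ : ℝ) (hρ0 : 0 ≤ ρ) (hρ1 : ρ ≤ 1)
    (mu : Fin k → ℝ)
    (hmu : ∀ j₁ : Fin k, mu j₁ = ∑ j : Fin k,
      if j₁ ≤ j then
        (Nat.choose (j.1 + 1) (j₁.1 + 1)) * ρ ^ (j₁.1 + 1) * (1 - ρ) ^ (j.1 - j₁.1) * lam j
      else 0) :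
    (∀ (n : ℕ) (t : ℝ), 0 ≤ t →
      HasDerivAt (fun s => gcpPMF k mu n s)
        (-(∑ j : Fin k, lam j * (1 - (1 - ρ) ^ (j.1 + 1))) * gcpPMF k mu n t
          + ∑ j : Fin k, ∑ j₁ ∈ Finset.Icc 1 (j.1 + 1),
              lam j * (Nat.choose (j.1 + 1) j₁) * ρ ^ j₁ * (1 - ρ) ^ (j.1 + 1 - j₁) *
                (if j₁ ≤ n then gcpPMF k mu (n - j₁) t else 0)) t) ∧
    gcpPMF k mu 0 0 = 1 ∧ (∀ n : ℕ, 1 ≤ n → gcpPMF k mu n 0 = 0) :=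
  type_II_splitting_first_component_ode_general k lam ρ mu hmu
end

section
/- Let λ = (λ_1,…,λ_k) be a nonnegative rate vector, let ρ_1,…,ρ_q ≥ 0 with Σ_{r=1}^{q} ρ_r = 1, let t ≥ 0, and let G(u_1,…,u_q,t) = exp( −Σ_{j=1}^{k} λ_j (1 − (Σ_{r=1}^{q} ρ_r u_r)^j) t ) be the joint probability generating function of the q Type II split components of a GCP obtained by rolling a q-faced die (face r with probability ρ_r) once for each unit of every jump. Then for any x ≠ y in {1,…,q}, the covariance ∂²G/∂u_x∂u_y evaluated at u_1 = ⋯ = u_q = 1 minus (∂G/∂u_x)(∂G/∂u_y) evaluated there equals Σ_{j=1}^{k} Σ_{(j_1,…,j_q) ∈ ℕ₀^q, j_1+⋯+j_q = j} (j!/(j_1!⋯j_q!)) (∏_{r=1}^{q} ρ_r^{j_r}) j_x j_y λ_j t = ρ_x ρ_y t Σ_{j=1}^{k} j(j−1) λ_j. Hence the q Type II split components are not pairwise independent in general. -/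
/-!
The generating function depends on `u` only through `s = ∑ r, ρ r * u r`: `G = exp (p s)` for a
polynomial `p` with `p 1 = 0`. Along the lines used in the statement `s` is affine in `u_x` and
`u_y`, so the covariance is `ρ_x ρ_y (G'' - G'²)(1) = ρ_x ρ_y p''(1)`. The multinomial form comes
from the same mixed derivative taken of the multinomial expansion of `s ^ n`, which gives
`E[N_x N_y] = n (n - 1) ρ_x ρ_y` for multinomial counts.
-/

open Finset

/-- The joint probability generating function of the `q` Type II split components of
a GCP with rates `lam`, obtained by rolling a `q`-faced die (face `r` with
probability `ρ r`) once for each unit of every jump: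
`G(u₁,…,u_q,t) = exp(−Σ_j λ_j (1 − (Σ_r ρ_r u_r)^j) t)`. -/
noncomputable def typeIIpgfQ (k q : ℕ) (lam : Fin k → ℝ) (ρ : Fin q → ℝ)
    (u : Fin q → ℝ) (t : ℝ) : ℝ :=
  Real.exp (-(∑ j : Fin k, lam j * (1 - (∑ r : Fin q, ρ r * u r) ^ (j.1 + 1))) * t)

open Polynomial

lemma sum_mul_update {ι R : Type*} [Fintype ι] [DecidableEq ι] [CommRing R] (ρ v : ι → R)
    (x : ι) (b : R) :
    ∑ r, ρ r * Function.update v x b r = ∑ r, ρ r * v r + ρ x * (b - v x) := by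
  rw [← sub_eq_iff_eq_add', ← sum_sub_distrib, Fintype.sum_eq_single x]
  · simp [mul_sub]
  · intro r hr
    simp [Function.update_of_ne hr]

lemma prod_update_update_pow {ι M : Type*} [Fintype ι] [DecidableEq ι] [CommMonoid M] {x y : ι}
    (hxy : x ≠ y) (a b : M) (c : ι → ℕ) :
    ∏ r, Function.update (Function.update (fun _ => (1 : M)) y a) x b r ^ c r
      = b ^ c x * a ^ c y := by
  rw [Fintype.prod_eq_mul x y hxy fun r hr => by
    simp [Function.update_of_ne hr.1, Function.update_of_ne hr.2]]
  simp [Function.update_of_ne hxy.symm]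

lemma deriv_comp_affine (g : ℝ → ℝ) (c β s : ℝ) :
    deriv (fun b => g (c + β * b)) s = β * deriv g (c + β * s) := by
  rw [← smul_eq_mul, ← deriv_comp_const_add]
  exact deriv_comp_mul_left β (fun z => g (c + z)) s

lemma deriv_deriv_comp_affine (g : ℝ → ℝ) (c α β a₀ b₀ : ℝ) :
    deriv (fun a => deriv (fun b => g (c + α * a + β * b)) b₀) a₀
      = α * β * deriv (deriv g) (c + α * a₀ + β * b₀) := by
  simp only [deriv_comp_affine, deriv_const_mul_field']
  rw [show (fun a => deriv g (c + α * a + β * b₀)) = fun a => deriv g ((c + β * b₀) + α * a) from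
    funext fun a => by ring_nf, deriv_comp_affine]
  ring_nf

lemma deriv_deriv_sum_monomial {ι : Type*} (s : Finset ι) (K : ι → ℝ) (m n : ι → ℕ) :
    deriv (fun a => deriv (fun b => ∑ i ∈ s, K i * a ^ m i * b ^ n i) 1) 1
      = ∑ i ∈ s, K i * m i * n i := by
  have hinner : ∀ a : ℝ, deriv (fun b => ∑ i ∈ s, K i * a ^ m i * b ^ n i) 1
      = ∑ i ∈ s, K i * a ^ m i * n i := by
    intro a
    rw [deriv_fun_sum fun i _ => by fun_prop]
    simp
  simp_rw [hinner]
  rw [deriv_fun_sum fun i _ => by fun_prop]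
  simp [mul_assoc]

lemma filter_piFinset_range_eq_piAntidiag {ι : Type*} [Fintype ι] [DecidableEq ι] (n : ℕ) :
    (Fintype.piFinset fun _ : ι => range (n + 1)).filter (fun c => ∑ r, c r = n)
      = piAntidiag univ n := by
  ext c
  simp only [mem_filter, Fintype.mem_piFinset, mem_range, mem_piAntidiag, mem_univ,
    implies_true, and_true]
  exact ⟨And.right, fun h =>
    ⟨fun r => Nat.lt_succ_of_le (h ▸ single_le_sum (by simp) (mem_univ r)), h⟩⟩

lemma factorial_div_prod_factorial_eq_multinomial {ι : Type*} [Fintype ι] {n : ℕ} {c : ι → ℕ}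
    (hc : ∑ r, c r = n) :
    (n.factorial : ℝ) / ∏ r, ((c r).factorial : ℝ) = Nat.multinomial univ c := by
  rw [div_eq_iff (by positivity), ← hc, ← Nat.multinomial_spec]
  push_cast
  ring

section Probability

variable {ι : Type*} [Fintype ι] [DecidableEq ι] {ρ : ι → ℝ}

lemma sum_mul_update_one (hρ : ∑ r, ρ r = 1) (x : ι) (b : ℝ) :
    ∑ r, ρ r * Function.update (fun _ => (1 : ℝ)) x b r = (1 - ρ x) + ρ x * b := by
  rw [sum_mul_update]
  simp only [mul_one, hρ]
  ring

lemma sum_mul_update_update_one (hρ : ∑ r, ρ r = 1) {x y : ι} (hxy : x ≠ y) (a b : ℝ) :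
    ∑ r, ρ r * Function.update (Function.update (fun _ => (1 : ℝ)) y a) x b r
      = (1 - ρ x - ρ y) + ρ y * a + ρ x * b := by
  rw [sum_mul_update, sum_mul_update_one hρ, Function.update_of_ne hxy]
  ring

lemma sum_multinomial_mul_prod_pow_mul_mul (hρ : ∑ r, ρ r = 1) {x y : ι} (hxy : x ≠ y)
    (n : ℕ) :
    ∑ c ∈ piAntidiag univ n, (Nat.multinomial univ c : ℝ) * (∏ r, ρ r ^ c r) * c x * c y
      = n * (n - 1) * ρ x * ρ y := by
  have hexpand : ∀ a b : ℝ, ((1 - ρ x - ρ y) + ρ y * a + ρ x * b) ^ n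
      = ∑ c ∈ piAntidiag univ n,
          ((Nat.multinomial univ c : ℝ) * ∏ r, ρ r ^ c r) * a ^ c y * b ^ c x := by
    intro a b
    rw [← sum_mul_update_update_one hρ hxy, sum_pow_eq_sum_piAntidiag]
    refine sum_congr rfl fun c _ => ?_
    simp_rw [mul_pow, prod_mul_distrib, prod_update_update_pow hxy]
    ring
  have hmixed := deriv_deriv_comp_affine (· ^ n) (1 - ρ x - ρ y) (ρ y) (ρ x) 1 1
  simp_rw [hexpand, deriv_deriv_sum_monomial] at hmixed
  have hpow : deriv (deriv fun s : ℝ => s ^ n) 1 = n * (n - 1) := by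
    show deriv^[2] (fun s : ℝ => s ^ n) 1 = _
    simp [iter_deriv_pow, prod_range_succ]
  rw [show 1 - ρ x - ρ y + ρ y * 1 + ρ x * 1 = 1 by ring, hpow] at hmixed
  calc _ = ∑ c ∈ piAntidiag univ n,
        ((Nat.multinomial univ c : ℝ) * ∏ r, ρ r ^ c r) * c y * c x :=
        sum_congr rfl fun c _ => by ring
    _ = _ := by rw [hmixed]; ring

end Probability

lemma deriv_exp_eval (p : ℝ[X]) :
    deriv (fun s => Real.exp (p.eval s)) = fun s => Real.exp (p.eval s) * p.derivative.eval s := by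
  funext s
  rw [deriv_exp p.differentiableAt, Polynomial.deriv]

lemma deriv_deriv_exp_eval_sub_sq {p : ℝ[X]} {s : ℝ} (hp : p.eval s = 0) :
    deriv (deriv fun z => Real.exp (p.eval z)) s - deriv (fun z => Real.exp (p.eval z)) s ^ 2
      = p.derivative.derivative.eval s := by
  rw [deriv_exp_eval, deriv_fun_mul (by fun_prop) p.derivative.differentiableAt,
    deriv_exp p.differentiableAt, Polynomial.deriv, Polynomial.deriv]
  simp only [hp, Real.exp_zero]
  ring

noncomputable def gcpExponent (k : ℕ) (lam : Fin k → ℝ) (t : ℝ) : ℝ[X] :=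
  -(∑ j : Fin k, C (lam j) * (1 - X ^ (j.1 + 1))) * C t

lemma typeIIpgfQ_eq_exp_gcpExponent (k q : ℕ) (lam : Fin k → ℝ) (ρ : Fin q → ℝ)
    (u : Fin q → ℝ) (t : ℝ) :
    typeIIpgfQ k q lam ρ u t = Real.exp ((gcpExponent k lam t).eval (∑ r, ρ r * u r)) := by
  simp [typeIIpgfQ, gcpExponent, eval_finsetSum]

lemma gcpExponent_eval_one (k : ℕ) (lam : Fin k → ℝ) (t : ℝ) :
    (gcpExponent k lam t).eval 1 = 0 := by
  simp [gcpExponent, eval_finsetSum]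

lemma gcpExponent_derivative_derivative_eval_one (k : ℕ) (lam : Fin k → ℝ) (t : ℝ) :
    (gcpExponent k lam t).derivative.derivative.eval 1
      = t * ∑ j : Fin k, (j.1 + 1) * j.1 * lam j := by
  simp [gcpExponent, eval_finsetSum, derivative_X_pow, sum_mul, mul_sum]
  exact sum_congr rfl fun j _ => by ring

lemma typeIIpgfQ_covariance {k q : ℕ} (lam : Fin k → ℝ) {ρ : Fin q → ℝ}
    (hρsum : ∑ r, ρ r = 1) (t : ℝ) {x y : Fin q} (hxy : x ≠ y) :
    deriv (fun a => deriv
          (fun b => typeIIpgfQ k q lam ρ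
            (Function.update (Function.update (fun _ => 1) y a) x b) t) 1) 1
        - deriv (fun b => typeIIpgfQ k q lam ρ (Function.update (fun _ => 1) x b) t) 1 *
          deriv (fun a => typeIIpgfQ k q lam ρ (Function.update (fun _ => 1) y a) t) 1
      = ρ x * ρ y * t * ∑ j : Fin k, (j.1 + 1) * j.1 * lam j := by
  set G : ℝ → ℝ := fun s => Real.exp ((gcpExponent k lam t).eval s) with hG
  have hG_comp : ∀ u, typeIIpgfQ k q lam ρ u t = G (∑ r, ρ r * u r) :=
    fun u => typeIIpgfQ_eq_exp_gcpExponent k q lam ρ u t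
  simp only [hG_comp, sum_mul_update_one hρsum, sum_mul_update_update_one hρsum hxy]
  rw [deriv_deriv_comp_affine, deriv_comp_affine, deriv_comp_affine]
  have hcumulant := deriv_deriv_exp_eval_sub_sq (gcpExponent_eval_one k lam t)
  rw [gcpExponent_derivative_derivative_eval_one, ← hG] at hcumulant
  calc _ = ρ x * ρ y * (deriv (deriv G) 1 - deriv G 1 ^ 2) := by ring_nf
    _ = _ := by rw [hcumulant]; ring

lemma sum_multinomial_moment_eq {k q : ℕ} (lam : Fin k → ℝ) {ρ : Fin q → ℝ}
    (hρsum : ∑ r, ρ r = 1) (t : ℝ) {x y : Fin q} (hxy : x ≠ y) :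
    (∑ j : Fin k,
        ∑ c ∈ (Fintype.piFinset fun _ : Fin q => Finset.range (j.1 + 2)).filter
          (fun c => ∑ r : Fin q, c r = j.1 + 1),
          ((Nat.factorial (j.1 + 1) : ℝ) / ∏ r : Fin q, (Nat.factorial (c r) : ℝ)) *
            (∏ r : Fin q, ρ r ^ (c r)) * (c x) * (c y) * lam j * t)
      = ρ x * ρ y * t * ∑ j : Fin k, (j.1 + 1) * j.1 * lam j := by
  rw [mul_sum]
  refine sum_congr rfl fun j _ => ?_
  rw [filter_piFinset_range_eq_piAntidiag (j.1 + 1)]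
  calc _ = (∑ c ∈ piAntidiag univ (j.1 + 1),
          (Nat.multinomial univ c : ℝ) * (∏ r, ρ r ^ c r) * c x * c y) * (lam j * t) := by
        rw [sum_mul]
        refine sum_congr rfl fun c hc => ?_
        rw [factorial_div_prod_factorial_eq_multinomial (mem_piAntidiag.1 hc).1]
        ring
    _ = _ := by
        rw [sum_multinomial_mul_prod_pow_mul_mul hρsum hxy]
        push_cast
        ring

theorem type_II_splitting_q_covariance_general (k : ℕ) (q : ℕ) (lam : Fin k → ℝ)
    (ρ : Fin q → ℝ) (hρsum : ∑ r : Fin q, ρ r = 1) (t : ℝ) (x y : Fin q) (hxy : x ≠ y) :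
    deriv (fun a => deriv
          (fun b => typeIIpgfQ k q lam ρ
            (Function.update (Function.update (fun _ => 1) y a) x b) t) 1) 1
        - deriv (fun b => typeIIpgfQ k q lam ρ (Function.update (fun _ => 1) x b) t) 1 *
          deriv (fun a => typeIIpgfQ k q lam ρ (Function.update (fun _ => 1) y a) t) 1
      = ∑ j : Fin k,
          ∑ c ∈ (Fintype.piFinset fun _ : Fin q => Finset.range (j.1 + 2)).filter
            (fun c => ∑ r : Fin q, c r = j.1 + 1),
            ((Nat.factorial (j.1 + 1) : ℝ) / ∏ r : Fin q, (Nat.factorial (c r) : ℝ)) *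
              (∏ r : Fin q, ρ r ^ (c r)) * (c x) * (c y) * lam j * t ∧
    (∑ j : Fin k,
        ∑ c ∈ (Fintype.piFinset fun _ : Fin q => Finset.range (j.1 + 2)).filter
          (fun c => ∑ r : Fin q, c r = j.1 + 1),
          ((Nat.factorial (j.1 + 1) : ℝ) / ∏ r : Fin q, (Nat.factorial (c r) : ℝ)) *
            (∏ r : Fin q, ρ r ^ (c r)) * (c x) * (c y) * lam j * t)
      = ρ x * ρ y * t * ∑ j : Fin k, (j.1 + 1) * j.1 * lam j := by
  have hmoment := sum_multinomial_moment_eq lam hρsum t hxy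
  exact ⟨(typeIIpgfQ_covariance lam hρsum t hxy).trans hmoment.symm, hmoment⟩

/-- For `x ≠ y`, the covariance of the `x`-th and `y`-th Type II split components,
`∂²G/∂u_x∂u_y` at `u = 1` minus the product `(∂G/∂u_x)(∂G/∂u_y)` there, equals
`Σ_j Σ_{j₁+⋯+j_q=j} (j!/(j₁!⋯j_q!)) (∏_r ρ_r^{j_r}) j_x j_y λ_j t
  = ρ_x ρ_y t Σ_j j(j−1) λ_j`.
Hence the `q` Type II split components are not pairwise independent in general. -/
theorem type_II_splitting_q_covariance (k : ℕ) (hk : 1 ≤ k) (q : ℕ) (hq : 1 ≤ q)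
    (lam : Fin k → ℝ) (hlam : ∀ j, 0 ≤ lam j)
    (ρ : Fin q → ℝ) (hρ : ∀ r, 0 ≤ ρ r) (hρsum : ∑ r : Fin q, ρ r = 1)
    (t : ℝ) (ht : 0 ≤ t) (x y : Fin q) (hxy : x ≠ y) :
    deriv (fun a => deriv
          (fun b => typeIIpgfQ k q lam ρ
            (Function.update (Function.update (fun _ => 1) y a) x b) t) 1) 1
        - deriv (fun b => typeIIpgfQ k q lam ρ (Function.update (fun _ => 1) x b) t) 1 *
          deriv (fun a => typeIIpgfQ k q lam ρ (Function.update (fun _ => 1) y a) t) 1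
      = ∑ j : Fin k,
          ∑ c ∈ (Fintype.piFinset fun _ : Fin q => Finset.range (j.1 + 2)).filter
            (fun c => ∑ r : Fin q, c r = j.1 + 1),
            ((Nat.factorial (j.1 + 1) : ℝ) / ∏ r : Fin q, (Nat.factorial (c r) : ℝ)) *
              (∏ r : Fin q, ρ r ^ (c r)) * (c x) * (c y) * lam j * t ∧
    (∑ j : Fin k,
        ∑ c ∈ (Fintype.piFinset fun _ : Fin q => Finset.range (j.1 + 2)).filter
          (fun c => ∑ r : Fin q, c r = j.1 + 1),
          ((Nat.factorial (j.1 + 1) : ℝ) / ∏ r : Fin q, (Nat.factorial (c r) : ℝ)) *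
            (∏ r : Fin q, ρ r ^ (c r)) * (c x) * (c y) * lam j * t)
      = ρ x * ρ y * t * ∑ j : Fin k, (j.1 + 1) * j.1 * lam j :=
  type_II_splitting_q_covariance_general k q lam ρ hρsum t x y hxy
end
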